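/- Lower bound on N(t) at a finite blow-up endpoint: let u: I×ℝ^2 → ℂ be a nonzero maximal-lifespan solution to the quintic NLS, almost periodic modulo symmetries with frequency scale N: I → ℝ^+. If T is a finite endpoint of I then N(t) ≳ |T − t|^{−1/2} for t near T; in particular lim_{t→T} N(t) = ∞. -/

import Mathlib

open MeasureTheory Real Filter
open scoped FourierTransform ENNReal

noncomputable section

abbrev R2 := EuclideanSpace ℝ (Fin 2)

def laplacian (f : R2 → ℂ) (x : R2) : ℂ :=
  ∑ i : Fin 2, fderiv ℝ (fun y => fderiv ℝ f y (EuclideanSpace.single i 1)) x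
    (EuclideanSpace.single i 1)

/-- `u` solves `i ∂ₜ u + Δu = |u|⁴ u` on the time interval `I`. -/
def SolvesNLSOn (I : Set ℝ) (u : ℝ → R2 → ℂ) : Prop :=
  ∀ t ∈ I, ∀ x, Complex.I * deriv (fun s => u s x) t + laplacian (u t) x
      = (‖u t x‖ : ℂ) ^ 4 * u t x

/-- The homogeneous `Ḣ^{1/2}(ℝ²)` norm. -/
def HhalfNorm (f : R2 → ℂ) : ℝ :=
  (∫ ξ : R2, ‖ξ‖ * ‖𝓕 f ξ‖ ^ 2) ^ ((1 : ℝ) / 2)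

/-- The fractional derivative `|∇|^s`. -/
def fracDeriv (s : ℝ) (f : R2 → ℂ) : R2 → ℂ :=
  fun x => 𝓕⁻ (fun ξ => ((‖ξ‖ ^ s : ℝ) : ℂ) * 𝓕 f ξ) x

/-- Almost periodicity modulo symmetries: there are a frequency scale `Nf`, spatial
center `xf` and compactness modulus `Cf` such that for every `η > 0` and `t ∈ I`, the
`Ḣ^{1/2}` mass outside the ball `|x - x(t)| ≤ C(η)/N(t)` and outside the frequency ball
`|ξ| ≤ C(η)N(t)` is at most `η`. -/
def AlmostPeriodic (I : Set ℝ) (u : ℝ → R2 → ℂ) (Nf : ℝ → ℝ) (xf : ℝ → R2)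
    (Cf : ℝ → ℝ) : Prop :=
  (∀ t ∈ I, 0 < Nf t) ∧
  ∀ η : ℝ, 0 < η → 0 < Cf η ∧ ∀ t ∈ I,
    (∫ x in {x : R2 | Cf η / Nf t ≤ ‖x - xf t‖}, ‖fracDeriv (1/2) (u t) x‖ ^ 2)
      + (∫ ξ in {ξ : R2 | Cf η * Nf t ≤ ‖ξ‖}, ‖ξ‖ * ‖𝓕 (u t) ξ‖ ^ 2) ≤ η

/-- The complementary concentration property: for every `η > 0` there is `c(η) > 0` so
that the `Ḣ^{1/2}` mass inside the ball `|x - x(t)| ≤ c(η)/N(t)` and inside the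
frequency ball `|ξ| ≤ c(η)N(t)` is at most `η`. -/
def APLower (I : Set ℝ) (u : ℝ → R2 → ℂ) (Nf : ℝ → ℝ) (xf : ℝ → R2) : Prop :=
  ∀ η : ℝ, 0 < η → ∃ c : ℝ, 0 < c ∧ ∀ t ∈ I,
    (∫ x in {x : R2 | ‖x - xf t‖ ≤ c / Nf t}, ‖fracDeriv (1/2) (u t) x‖ ^ 2)
      + (∫ ξ in {ξ : R2 | ‖ξ‖ ≤ c * Nf t}, ‖ξ‖ * ‖𝓕 (u t) ξ‖ ^ 2) ≤ η

/-- lower bound on `N(t)` at a finite blow-up endpoint: for a nonzero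
almost periodic solution whose lifespan `I` has finite supremum `T ∉ I`, and which
satisfies the local constancy property (`[t₀ - δN(t₀)⁻², t₀ + δN(t₀)⁻²] ⊆ I`), one has
`N(t) ≳ |T - t|^{-1/2}` on `I`; in particular `N(t) → ∞` as `t → T`. -/
theorem N_blowup_at_endpoint (I : Set ℝ) (u : ℝ → R2 → ℂ) (Nf : ℝ → ℝ) (xf : ℝ → R2)
    (Cf : ℝ → ℝ) (T δ : ℝ)
    (hsol : SolvesNLSOn I u)
    (hap : AlmostPeriodic I u Nf xf Cf)
    (hne : ∃ t ∈ I, ∃ x, u t x ≠ 0)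
    (hδ : 0 < δ)
    (hloc : ∀ t0 ∈ I,
      Set.Icc (t0 - δ * ((Nf t0) ^ 2)⁻¹) (t0 + δ * ((Nf t0) ^ 2)⁻¹) ⊆ I)
    (hT : IsLUB I T) (hTI : T ∉ I) :
    ∃ c : ℝ, 0 < c ∧ (∀ t ∈ I, c * |T - t| ^ (-(1/2) : ℝ) ≤ Nf t) ∧
      Tendsto Nf (nhdsWithin T I) atTop := by
  have hNpos := hap.1
  -- key: for t ∈ I, T - t ≥ δ / (Nf t)^2 > 0
  have key : ∀ t ∈ I, 0 < T - t ∧ δ ≤ (T - t) * (Nf t) ^ 2 := by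
    intro t ht
    have hN := hNpos t ht
    have hN2 : (0:ℝ) < (Nf t) ^ 2 := by positivity
    have hmem : t + δ * ((Nf t) ^ 2)⁻¹ ∈ I := by
      apply hloc t ht
      constructor <;> nlinarith [inv_pos.2 hN2]
    have hle : t + δ * ((Nf t) ^ 2)⁻¹ ≤ T := hT.1 hmem
    have hpos : 0 < δ * ((Nf t) ^ 2)⁻¹ := by positivity
    have h1 : 0 < T - t := by linarith
    refine ⟨h1, ?_⟩
    have : δ * ((Nf t) ^ 2)⁻¹ ≤ T - t := by linarith
    calc δ = δ * ((Nf t) ^ 2)⁻¹ * (Nf t) ^ 2 := by field_simp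
      _ ≤ (T - t) * (Nf t) ^ 2 := by nlinarith
  have hbound : ∀ t ∈ I, Real.sqrt δ * (Real.sqrt (T - t))⁻¹ ≤ Nf t := by
    intro t ht
    obtain ⟨h1, h2⟩ := key t ht
    have hN := hNpos t ht
    have hs : 0 < Real.sqrt (T - t) := Real.sqrt_pos.2 h1
    rw [mul_inv_le_iff₀ hs]
    have : Real.sqrt δ ≤ Real.sqrt ((T - t) * (Nf t) ^ 2) := Real.sqrt_le_sqrt h2
    rwa [Real.sqrt_mul h1.le, Real.sqrt_sq hN.le, mul_comm] at this
  refine ⟨Real.sqrt δ, Real.sqrt_pos.2 hδ, ?_, ?_⟩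
  · intro t ht
    have h1 := (key t ht).1
    have := hbound t ht
    rwa [abs_of_pos h1, Real.rpow_neg h1.le, ← Real.sqrt_eq_rpow]
  · -- Tendsto
    have h0 : Tendsto (fun t => T - t) (nhdsWithin T I) (nhdsWithin 0 (Set.Ioi 0)) := by
      rw [tendsto_nhdsWithin_iff]
      constructor
      · have : Tendsto (fun t : ℝ => T - t) (nhds T) (nhds (T - T)) :=
          (tendsto_const_nhds.sub tendsto_id)
        simpa using this.mono_left nhdsWithin_le_nhds
      · filter_upwards [self_mem_nhdsWithin] with t ht
        exact Set.mem_Ioi.2 (key t ht).1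
    have h1 : Tendsto (fun t => Real.sqrt (T - t)) (nhdsWithin T I)
        (nhdsWithin 0 (Set.Ioi 0)) := by
      rw [tendsto_nhdsWithin_iff]
      constructor
      · simpa [Function.comp_def] using (Real.continuous_sqrt.tendsto 0).comp
          (h0.mono_right nhdsWithin_le_nhds)
      · filter_upwards [self_mem_nhdsWithin] with t ht
        exact Set.mem_Ioi.2 (Real.sqrt_pos.2 (key t ht).1)
    have h2 : Tendsto (fun t => (Real.sqrt (T - t))⁻¹) (nhdsWithin T I) atTop :=
      tendsto_inv_nhdsGT_zero.comp h1
    have h3 : Tendsto (fun t => Real.sqrt δ * (Real.sqrt (T - t))⁻¹)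
        (nhdsWithin T I) atTop := h2.const_mul_atTop (Real.sqrt_pos.2 hδ)
    apply tendsto_atTop_mono' _ _ h3
    filter_upwards [self_mem_nhdsWithin] with t ht using hbound t ht
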